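/- Four symmetric sequences A, B, C, D of length n with entries in {±1} are Williamson sequences if and only if PSD_A(s) + PSD_B(s) + PSD_C(s) + PSD_D(s) = 4n for all s = 0, …, ⌊n/2⌋. -/

import Mathlib

/-- The periodic autocorrelation function of the length-`n` sequence `a`. -/
def paf (n : ℕ) (a : ℕ → ℤ) (s : ℕ) : ℤ :=
  ∑ k ∈ Finset.range n, a k * a ((k + s) % n)

/-- `a` is a symmetric sequence of length `n`: `aᵢ = a_{n-i}` for `1 ≤ i < n`. -/
def SymmSeq (n : ℕ) (a : ℕ → ℤ) : Prop := ∀ i, 1 ≤ i → i < n → a i = a (n - i)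

/-- All entries of the length-`n` sequence `a` are `±1`. -/
def PMOne (n : ℕ) (a : ℕ → ℤ) : Prop := ∀ i < n, a i = 1 ∨ a i = -1

/-- The discrete Fourier transform of the length-`n` sequence `a`:
`DFT_a(s) = ∑_{k=0}^{n-1} a_k e^{2πiks/n}`. -/
noncomputable def dft (n : ℕ) (a : ℕ → ℤ) (s : ℤ) : ℂ :=
  ∑ k ∈ Finset.range n, (a k : ℂ) * Complex.exp (2 * Real.pi * Complex.I * k * s / n)

/-- The power spectral density of the length-`n` sequence `a`. -/
noncomputable def psd (n : ℕ) (a : ℕ → ℤ) (s : ℤ) : ℝ :=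
  ‖dft n a s‖ ^ 2

/-!
Read a length-`n` sequence as a function on `ZMod n`. Its PAF is then its autocorrelation, whose
discrete Fourier transform is the PSD (Wiener–Khinchin). For `±1` sequences `PAF(0) = n`, so the
Williamson condition says that the sum `P` of the four autocorrelations is `4n` times the
indicator of `0`; since the DFT is injective and sends that indicator to the constant `4n`, this
is equivalent to the sum of the four PSDs being constantly `4n`. Autocorrelations of real
sequences are even, and so are their transforms, so it suffices to test `0 ≤ s ≤ n / 2`.
-/

open Finset
open scoped ComplexConjugate

namespace ZMod

variable {N : ℕ} [NeZero N]

theorem sum_range_eq_sum_val {M : Type*} [AddCommMonoid M] (f : ℕ → M) :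
    ∑ k ∈ range N, f k = ∑ x : ZMod N, f x.val :=
  sum_nbij' (fun k => (k : ZMod N)) val (by simp) (by simp [val_lt])
    (fun k hk => val_cast_of_lt (mem_range.1 hk)) (by simp)
    (fun k hk => by rw [val_cast_of_lt (mem_range.1 hk)])

theorem forall_iff_forall_natCast_le_half {q : ZMod N → Prop} (hq : ∀ x, q (-x) → q x) :
    (∀ x, q x) ↔ ∀ s : ℕ, s ≤ N / 2 → q s := by
  refine ⟨fun h s _ => h s, fun h x => ?_⟩
  have hx := h _ x.natAbs_valMinAbs_le
  rw [natCast_natAbs_valMinAbs] at hx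
  split_ifs at hx
  exacts [hx, hq x hx]

theorem eq_single_zero_iff_of_even {M : Type*} [Zero M] {P : ZMod N → M} (hP : P.Even) :
    P = Pi.single 0 (P 0) ↔ ∀ s : ℕ, 1 ≤ s → s ≤ N / 2 → P s = 0 := by
  have hN := NeZero.pos N
  rw [funext_iff, forall_iff_forall_natCast_le_half fun x h => by
    simpa [Pi.single_apply, hP x] using h]
  refine forall_congr' fun s => ?_
  rcases Nat.eq_zero_or_pos s with rfl | hs
  · simp
  have hs0 (hsN : s ≤ N / 2) : (s : ZMod N) ≠ 0 := fun h0 =>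
    Nat.not_dvd_of_pos_of_lt hs (by omega) ((natCast_eq_zero_iff s N).1 h0)
  exact ⟨fun h _ hsN => by simpa [hs0 hsN] using h hsN,
    fun h hsN => by simpa [hs0 hsN] using h hs hsN⟩

theorem eq_const_iff_of_even {M : Type*} {F : ZMod N → M} (hF : F.Even) {c : M} :
    F = (fun _ => c) ↔ ∀ s : ℕ, s ≤ N / 2 → F s = c := by
  rw [funext_iff]
  exact forall_iff_forall_natCast_le_half fun x h => hF x ▸ h

noncomputable def autocorr (Φ : ZMod N → ℂ) (t : ZMod N) : ℂ := ∑ j, conj (Φ j) * Φ (j + t)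

theorem autocorr_neg {Φ : ZMod N → ℂ} (hΦ : ∀ j, conj (Φ j) = Φ j) (t : ZMod N) :
    autocorr Φ (-t) = autocorr Φ t := by
  unfold autocorr
  rw [← Equiv.sum_comp (Equiv.addRight t)]
  simp [hΦ, mul_comm]

theorem dft_single_zero (c : ℂ) : 𝓕 (Pi.single 0 c : ZMod N → ℂ) = fun _ => c := by
  ext k
  simp [dft_apply, Pi.single_apply]

theorem dft_eq_const_iff {Φ : ZMod N → ℂ} {c : ℂ} : 𝓕 Φ = (fun _ => c) ↔ Φ = Pi.single 0 c := by
  rw [← dft_single_zero, dft.injective.eq_iff]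

theorem sq_norm_dft_eq_dft_autocorr (Φ : ZMod N → ℂ) (k : ZMod N) :
    (‖𝓕 Φ k‖ ^ 2 : ℂ) = 𝓕 (autocorr Φ) k := by
  have hshift : ∀ j, ∑ t, stdAddChar (-(t * k)) * Φ (j + t) = stdAddChar (j * k) * 𝓕 Φ k := by
    intro j
    rw [dft_apply, mul_sum, ← Equiv.sum_comp (Equiv.addLeft (-j))]
    refine sum_congr rfl fun i _ => ?_
    simp only [Equiv.coe_addLeft, smul_eq_mul, ← mul_assoc, ← AddChar.map_add_eq_mul]
    ring_nf
  calc (‖𝓕 Φ k‖ ^ 2 : ℂ) = conj (𝓕 Φ k) * 𝓕 Φ k := by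
        rw [mul_comm, Complex.mul_conj, ← Complex.sq_norm]; push_cast; rfl
    _ = ∑ j, conj (Φ j) * (stdAddChar (j * k) * 𝓕 Φ k) := by
        simp only [dft_apply, map_sum, sum_mul, smul_eq_mul, map_mul, ← AddChar.map_neg_eq_conj,
          neg_neg]
        exact sum_congr rfl fun j _ => by ring
    _ = ∑ j, conj (Φ j) * ∑ t, stdAddChar (-(t * k)) * Φ (j + t) := by simp only [hshift]
    _ = 𝓕 (autocorr Φ) k := by
        simp only [dft_apply, autocorr, smul_eq_mul, mul_sum]
        rw [sum_comm]
        exact sum_congr rfl fun j _ => sum_congr rfl fun t _ => by ring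

end ZMod

open ZMod

noncomputable def ZMod.ofSeq {N : ℕ} (a : ℕ → ℤ) (x : ZMod N) : ℂ := a x.val

theorem paf_zero_of_pmOne {N : ℕ} {a : ℕ → ℤ} (ha : PMOne N a) : paf N a 0 = N := by
  calc paf N a 0 = ∑ _k ∈ range N, 1 := sum_congr rfl fun k hk => by
        rw [add_zero, Nat.mod_eq_of_lt (mem_range.1 hk)]
        rcases ha k (mem_range.1 hk) with h | h <;> simp [h]
    _ = N := by simp

variable {N : ℕ} [NeZero N]

theorem paf_eq_autocorr (a : ℕ → ℤ) (s : ℕ) :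
    (paf N a s : ℂ) = autocorr (ofSeq a) (s : ZMod N) := by
  simp only [paf, autocorr, ofSeq, Int.cast_sum, Int.cast_mul, map_intCast,
    sum_range_eq_sum_val (fun k => (a k : ℂ) * a ((k + s) % N)), val_add, val_natCast,
    Nat.add_mod_mod]

-- Mathlib's `𝓕` has kernel `e^{-2πijk/N}`, the conjugate of the one in `dft`.
theorem dft_eq_dft_ofSeq (a : ℕ → ℤ) (s : ℤ) : dft N a s = 𝓕 (ofSeq a) (-(s : ZMod N)) := by
  rw [_root_.dft, sum_range_eq_sum_val (fun k => (a k : ℂ) * Complex.exp _), dft_apply]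
  refine sum_congr rfl fun x _ => ?_
  have hcast : x * (s : ZMod N) = ((x.val * s : ℤ) : ZMod N) := by push_cast; simp
  rw [smul_eq_mul, mul_comm, ofSeq, mul_neg, neg_neg, hcast, stdAddChar_coe]
  push_cast
  ring_nf

theorem autocorr_ofSeq_even (a : ℕ → ℤ) : (autocorr (ofSeq (N := N) a)).Even :=
  autocorr_neg fun _ => map_intCast _ _

theorem psd_eq_dft_autocorr (a : ℕ → ℤ) (s : ℤ) :
    (psd N a s : ℂ) = 𝓕 (autocorr (ofSeq a)) (s : ZMod N) := by
  rw [psd, dft_eq_dft_ofSeq, ← dft_even_iff.2 (autocorr_ofSeq_even a),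
    ← sq_norm_dft_eq_dft_autocorr]
  push_cast
  rfl

theorem williamson_iff_psd_general (n : ℕ) (a b c d : ℕ → ℤ)
    (hpa : PMOne n a) (hpb : PMOne n b) (hpc : PMOne n c) (hpd : PMOne n d) :
    (∀ s, 1 ≤ s → s ≤ n / 2 → paf n a s + paf n b s + paf n c s + paf n d s = 0) ↔
      ∀ s : ℕ, s ≤ n / 2 →
        psd n a s + psd n b s + psd n c s + psd n d s = 4 * n := by
  rcases n.eq_zero_or_pos with rfl | hn
  · exact iff_of_true (fun s h1 h2 => by omega) (fun s _ => by simp [psd, _root_.dft])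
  have : NeZero n := ⟨hn.ne'⟩
  set P : ZMod n → ℂ := autocorr (ofSeq a) + autocorr (ofSeq b) + autocorr (ofSeq c) +
    autocorr (ofSeq d)
  have hP_even : P.Even := by
    simp only [Function.Even, P, Pi.add_apply, autocorr_ofSeq_even _ _, implies_true]
  have hpaf (s : ℕ) : ((paf n a s + paf n b s + paf n c s + paf n d s : ℤ) : ℂ) = P s := by
    push_cast
    simp only [paf_eq_autocorr, P, Pi.add_apply]
  have hpsd (s : ℕ) : ((psd n a s + psd n b s + psd n c s + psd n d s : ℝ) : ℂ) = 𝓕 P s := by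
    push_cast
    simp only [psd_eq_dft_autocorr, Int.cast_natCast, P, map_add, Pi.add_apply]
  have hP_zero : P 0 = 4 * n := by
    rw [← Nat.cast_zero, ← hpaf, paf_zero_of_pmOne hpa, paf_zero_of_pmOne hpb,
      paf_zero_of_pmOne hpc, paf_zero_of_pmOne hpd]
    push_cast
    ring
  calc _ ↔ ∀ s : ℕ, 1 ≤ s → s ≤ n / 2 → P s = 0 := by simp_rw [← hpaf, Int.cast_eq_zero]
    _ ↔ P = Pi.single 0 (4 * n : ℂ) := by rw [← hP_zero, eq_single_zero_iff_of_even hP_even]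
    _ ↔ 𝓕 P = fun _ => (4 * n : ℂ) := dft_eq_const_iff.symm
    _ ↔ ∀ s : ℕ, s ≤ n / 2 → 𝓕 P s = 4 * n := eq_const_iff_of_even (dft_even_iff.2 hP_even)
    _ ↔ _ := by simp_rw [← hpsd]; norm_cast

theorem williamson_iff_psd (n : ℕ) (a b c d : ℕ → ℤ)
    (hsa : SymmSeq n a) (hsb : SymmSeq n b) (hsc : SymmSeq n c) (hsd : SymmSeq n d)
    (hpa : PMOne n a) (hpb : PMOne n b) (hpc : PMOne n c) (hpd : PMOne n d) :
    (∀ s, 1 ≤ s → s ≤ n / 2 → paf n a s + paf n b s + paf n c s + paf n d s = 0) ↔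
      ∀ s : ℕ, s ≤ n / 2 →
        psd n a s + psd n b s + psd n c s + psd n d s = 4 * n :=
  williamson_iff_psd_general n a b c d hpa hpb hpc hpd
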